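/- arXiv:2102.01735 — 4 statements merged into one kernel-verified Lean document; each statement's English description precedes it below -/
import Mathlib

section
/- For any positive real numbers σ₁, σ₂, σ₃ and all t ≥ 0, sup over |ξ| ≥ 1 of |ξ|^{-σ₁} · exp(-σ₂ · t · |ξ|^{-σ₃}) is at most (1 + σ₁/(σ₂σ₃))^{σ₁/σ₃} · (1 + t)^{-σ₁/σ₃}. -/
/-!
With `y = |ξ| ^ (-σ₃) ∈ (0, 1]` and `b = σ₂ σ₃ / σ₁` the quantity equals
`(y e^{-b t y}) ^ (σ₁ / σ₃)`, so it suffices to show `y e^{-b t y} ≤ (1 + 1/b) / (1 + t)`. Since `y ≤ 1`,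
`y (1 + t) ≤ (1 + 1/b)(1 + b t y) ≤ (1 + 1/b) e^{b t y}`.
-/

open Real

theorem rpow_neg_mul_exp_eq {x : ℝ} (hx : 0 < x) {p q : ℝ} (hp : p ≠ 0) (hq : q ≠ 0)
    (c : ℝ) :
    x ^ (-p) * exp (c * x ^ (-q)) = (x ^ (-q) * exp (c * q / p * x ^ (-q))) ^ (p / q) := by
  rw [mul_rpow (by positivity) (exp_nonneg _), ← rpow_mul hx.le, ← exp_mul]
  congr 2 <;> field_simp

theorem mul_exp_neg_mul_le_div {b t y : ℝ} (hb : 0 < b) (ht : 0 ≤ t) (hy₀ : 0 ≤ y)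
    (hy₁ : y ≤ 1) :
    y * exp (-(b * t) * y) ≤ (1 + b⁻¹) / (1 + t) := by
  have key : y * (1 + t) ≤ (1 + b⁻¹) * exp (b * t * y) := calc
    y * (1 + t) ≤ (1 + b⁻¹) * (1 + b * t * y) := by
      have hcancel : b⁻¹ * (b * t * y) = t * y := by field_simp
      nlinarith [mul_nonneg (mul_nonneg hb.le ht) hy₀, inv_pos.2 hb]
    _ ≤ (1 + b⁻¹) * exp (b * t * y) := by
      gcongr
      linarith [add_one_le_exp (b * t * y)]
  rw [le_div_iff₀ (by linarith), neg_mul, exp_neg, mul_right_comm, ← div_eq_mul_inv,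
    div_le_iff₀ (exp_pos _)]
  exact key

theorem stmt_1 (σ₁ σ₂ σ₃ : ℝ) (h1 : 0 < σ₁) (h2 : 0 < σ₂) (h3 : 0 < σ₃)
    (t : ℝ) (ht : 0 ≤ t) :
    ∀ ξ : ℝ, 1 ≤ |ξ| →
      |ξ| ^ (-σ₁) * Real.exp (-σ₂ * t * |ξ| ^ (-σ₃))
        ≤ (1 + σ₁ / (σ₂ * σ₃)) ^ (σ₁ / σ₃) * (1 + t) ^ (-σ₁ / σ₃) := by
  intro ξ hξ
  have hξ₀ : 0 < |ξ| := one_pos.trans_le hξ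
  have hy₀ : 0 ≤ |ξ| ^ (-σ₃) := by positivity
  have hy₁ : |ξ| ^ (-σ₃) ≤ 1 := rpow_le_one_of_one_le_of_nonpos hξ (by linarith)
  have hrate : -σ₂ * t * σ₃ / σ₁ = -(σ₂ * σ₃ / σ₁ * t) := by ring
  have hrhs : (1 + σ₁ / (σ₂ * σ₃)) ^ (σ₁ / σ₃) * (1 + t) ^ (-σ₁ / σ₃)
      = ((1 + (σ₂ * σ₃ / σ₁)⁻¹) / (1 + t)) ^ (σ₁ / σ₃) := by
    rw [inv_div, div_rpow (by positivity) (by linarith), neg_div, rpow_neg (by linarith)]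
    exact (div_eq_mul_inv _ _).symm
  rw [rpow_neg_mul_exp_eq hξ₀ h1.ne' h3.ne', hrate, hrhs]
  exact rpow_le_rpow (by positivity) (mul_exp_neg_mul_le_div (by positivity) ht hy₀ hy₁)
    (by positivity)
end

section
/- Let k₁, k₂, k₃, k₄ > 0 and define the energy Ê(ξ,t) = (1/2)(k₁|v̂|² + |û|² + k₂|ẑ|² + |ŷ|² + k₃|φ̂|² + |θ̂|² + k₄|σ̂|² + |η̂|²) for complex-valued functions v̂, û, ẑ, ŷ, φ̂, θ̂, σ̂, η̂ of t (depending on a parameter ξ). If these functions satisfy the ODE system: v̂' = iξû + ŷ + θ̂; û' = ik₁ξv̂ − iτ₁γξη̂; ẑ' = iξŷ; ŷ' = ik₂ξẑ − k₁v̂ − iτ₂γξη̂; φ̂' = iξθ̂; θ̂' = ik₃ξφ̂ − k₁v̂ − iτ₃γξη̂; σ̂' = iξη̂; η̂' = ik₄ξσ̂ − k₅ξ^{2ε₀}η̂ − iγξ(τ₁û + τ₂ŷ + τ₃θ̂), where γ ∈ ℝ, k₅ > 0, ε₀ ∈ {0,1} and (τ₁,τ₂,τ₃) ∈ ℝ³,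 then (d/dt)Ê(ξ,t) = −k₅ ξ^{2ε₀} |η̂(ξ,t)|². -/
open Complex

/-- The coupling terms of the system are skew with respect to the energy inner product, so
only the damping `d η` in the last equation contributes to the rate of change of the energy. -/
theorem laminatedTimoshenko_power_balance (k₁ k₂ k₃ k₄ d γ τ₁ τ₂ τ₃ ξ : ℝ)
    (v u z y φ θ σ η : ℂ) :
    k₁ * inner ℝ v (I * ξ * u + y + θ)
      + inner ℝ u (I * k₁ * ξ * v - I * τ₁ * γ * ξ * η)
      + k₂ * inner ℝ z (I * ξ * y)
      + inner ℝ y (I * k₂ * ξ * z - k₁ * v - I * τ₂ * γ * ξ * η)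
      + k₃ * inner ℝ φ (I * ξ * θ)
      + inner ℝ θ (I * k₃ * ξ * φ - k₁ * v - I * τ₃ * γ * ξ * η)
      + k₄ * inner ℝ σ (I * ξ * η)
      + inner ℝ η
          (I * k₄ * ξ * σ - d * η - I * γ * ξ * (τ₁ * u + τ₂ * y + τ₃ * θ))
      = -d * ‖η‖ ^ 2 := by
  simp only [Complex.inner, mul_re, mul_im, sub_re, sub_im, add_re, add_im, I_re, I_im,
    ofReal_re, ofReal_im, conj_re, conj_im, Complex.sq_norm, normSq_apply]
  ring

theorem stmt_5_general (k₁ k₂ k₃ k₄ k₅ γ τ₁ τ₂ τ₃ ξ : ℝ) (ε₀ : ℕ)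
    (v u z y φ θ σ η : ℝ → ℂ)
    (hv : Differentiable ℝ v) (hu : Differentiable ℝ u)
    (hz : Differentiable ℝ z) (hy : Differentiable ℝ y)
    (hφ : Differentiable ℝ φ) (hθ : Differentiable ℝ θ)
    (hσ : Differentiable ℝ σ) (hη : Differentiable ℝ η)
    (e1 : ∀ t, deriv v t = Complex.I * ξ * u t + y t + θ t)
    (e2 : ∀ t, deriv u t = Complex.I * k₁ * ξ * v t - Complex.I * τ₁ * γ * ξ * η t)
    (e3 : ∀ t, deriv z t = Complex.I * ξ * y t)
    (e4 : ∀ t, deriv y t = Complex.I * k₂ * ξ * z t - k₁ * v t - Complex.I * τ₂ * γ * ξ * η t)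
    (e5 : ∀ t, deriv φ t = Complex.I * ξ * θ t)
    (e6 : ∀ t, deriv θ t = Complex.I * k₃ * ξ * φ t - k₁ * v t - Complex.I * τ₃ * γ * ξ * η t)
    (e7 : ∀ t, deriv σ t = Complex.I * ξ * η t)
    (e8 : ∀ t, deriv η t = Complex.I * k₄ * ξ * σ t - (k₅ * ξ ^ (2 * ε₀) : ℝ) * η t
            - Complex.I * γ * ξ * (τ₁ * u t + τ₂ * y t + τ₃ * θ t))
    (t : ℝ) :
    deriv (fun s =>
        (1 / 2) * (k₁ * ‖v s‖ ^ 2 + ‖u s‖ ^ 2 + k₂ * ‖z s‖ ^ 2 + ‖y s‖ ^ 2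
          + k₃ * ‖φ s‖ ^ 2 + ‖θ s‖ ^ 2 + k₄ * ‖σ s‖ ^ 2 + ‖η s‖ ^ 2)) t
      = -k₅ * ξ ^ (2 * ε₀) * ‖η t‖ ^ 2 := by
  have hE := (((((((((hv t).hasDerivAt.norm_sq.const_mul k₁).add (hu t).hasDerivAt.norm_sq).add
    ((hz t).hasDerivAt.norm_sq.const_mul k₂)).add (hy t).hasDerivAt.norm_sq).add
    ((hφ t).hasDerivAt.norm_sq.const_mul k₃)).add (hθ t).hasDerivAt.norm_sq).add
    ((hσ t).hasDerivAt.norm_sq.const_mul k₄)).add (hη t).hasDerivAt.norm_sq).const_mul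
    (1 / 2 : ℝ)
  refine hE.deriv.trans ?_
  rw [e1, e2, e3, e4, e5, e6, e7, e8]
  linear_combination laminatedTimoshenko_power_balance k₁ k₂ k₃ k₄ (k₅ * ξ ^ (2 * ε₀))
    γ τ₁ τ₂ τ₃ ξ (v t) (u t) (z t) (y t) (φ t) (θ t) (σ t) (η t)

theorem stmt_5 (k₁ k₂ k₃ k₄ k₅ γ τ₁ τ₂ τ₃ ξ : ℝ) (ε₀ : ℕ)
    (hk₁ : 0 < k₁) (hk₂ : 0 < k₂) (hk₃ : 0 < k₃) (hk₄ : 0 < k₄) (hk₅ : 0 < k₅)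
    (hε : ε₀ = 0 ∨ ε₀ = 1)
    (v u z y φ θ σ η : ℝ → ℂ)
    (hv : Differentiable ℝ v) (hu : Differentiable ℝ u)
    (hz : Differentiable ℝ z) (hy : Differentiable ℝ y)
    (hφ : Differentiable ℝ φ) (hθ : Differentiable ℝ θ)
    (hσ : Differentiable ℝ σ) (hη : Differentiable ℝ η)
    (e1 : ∀ t, deriv v t = Complex.I * ξ * u t + y t + θ t)
    (e2 : ∀ t, deriv u t = Complex.I * k₁ * ξ * v t - Complex.I * τ₁ * γ * ξ * η t)
    (e3 : ∀ t, deriv z t = Complex.I * ξ * y t)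
    (e4 : ∀ t, deriv y t = Complex.I * k₂ * ξ * z t - k₁ * v t - Complex.I * τ₂ * γ * ξ * η t)
    (e5 : ∀ t, deriv φ t = Complex.I * ξ * θ t)
    (e6 : ∀ t, deriv θ t = Complex.I * k₃ * ξ * φ t - k₁ * v t - Complex.I * τ₃ * γ * ξ * η t)
    (e7 : ∀ t, deriv σ t = Complex.I * ξ * η t)
    (e8 : ∀ t, deriv η t = Complex.I * k₄ * ξ * σ t - (k₅ * ξ ^ (2 * ε₀) : ℝ) * η t
            - Complex.I * γ * ξ * (τ₁ * u t + τ₂ * y t + τ₃ * θ t))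
    (t : ℝ) :
    deriv (fun s =>
        (1 / 2) * (k₁ * ‖v s‖ ^ 2 + ‖u s‖ ^ 2 + k₂ * ‖z s‖ ^ 2 + ‖y s‖ ^ 2
          + k₃ * ‖φ s‖ ^ 2 + ‖θ s‖ ^ 2 + k₄ * ‖σ s‖ ^ 2 + ‖η s‖ ^ 2)) t
      = -k₅ * ξ ^ (2 * ε₀) * ‖η t‖ ^ 2 :=
  stmt_5_general k₁ k₂ k₃ k₄ k₅ γ τ₁ τ₂ τ₃ ξ ε₀ v u z y φ θ σ η hv hu hz hy hφ hθ hσ hη e1 e2 e3 e4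
    e5 e6 e7 e8 t
end

section
/- Let f : ℝ → ℝ with f(ξ) ≥ (1/5)ξ⁶ for |ξ| ≤ 1, let c > 0, j ∈ ℕ, and let Û₀ : ℝ → ℂⁿ be bounded with ‖Û₀‖_∞ ≤ ‖U₀‖_{L¹}. Then ∫_{|ξ|≤1} ξ^{2j} e^{−c f(ξ) t} |Û₀(ξ)|² dξ ≤ C (1+t)^{−(1+2j)/6} ‖U₀‖_{L¹}² for all t ≥ 0, where C depends only on c and j. -/
/-!
On `|ξ| ≤ 1` the hypothesis on `f` gives `c f(ξ) t ≥ a ξ⁶ t ≥ a (1 + t) ξ⁶ - a` with `a = c / 5`,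
so the integrand is at most `eᵃ M² ξ^{2j} e^{-a(1+t)ξ⁶}`. Extending the integral to all of `ℝ`
and substituting `x = (1 + t)^{1/6} ξ` produces the factor `(1 + t)^{-(1+2j)/6}` times the
finite constant `∫ x^{2j} e^{-a x⁶} dx`.
-/

open MeasureTheory Real Set

lemma integrable_of_even_of_integrableOn_Ioi {E : Type*} [NormedAddCommGroup E] {g : ℝ → E}
    (heven : ∀ x, g (-x) = g x) (hg : IntegrableOn g (Ioi 0)) : Integrable g := by
  rw [← integrableOn_univ, ← Iio_union_Ici (a := (0 : ℝ)), integrableOn_union,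
    integrableOn_Ici_iff_integrableOn_Ioi]
  refine ⟨?_, hg⟩
  rw [← (Measure.measurePreserving_neg (volume : Measure ℝ)).integrableOn_comp_preimage
    (Homeomorph.neg ℝ).measurableEmbedding]
  simp only [Function.comp_def, neg_preimage, neg_Iio, neg_zero, heven]
  exact hg

section PowMulExpNegMulPow

variable {k p : ℕ} {a : ℝ}

lemma integrable_pow_mul_exp_neg_mul_pow (hk : Even k) (hp : Even p) (hp0 : p ≠ 0) (ha : 0 < a) :
    Integrable fun x : ℝ => x ^ k * exp (-a * x ^ p) := by
  refine integrable_of_even_of_integrableOn_Ioi (fun x => by rw [hk.neg_pow, hp.neg_pow]) ?_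
  have hIoi := integrableOn_rpow_mul_exp_neg_mul_rpow (p := p) (s := k)
    (by linarith [k.cast_nonneg (α := ℝ)]) (Nat.cast_pos.2 (Nat.pos_of_ne_zero hp0)) ha
  simpa only [rpow_natCast] using hIoi

lemma integral_pow_mul_exp_neg_mul_pow_pos (hk : Even k) (hp : Even p) (hp0 : p ≠ 0)
    (ha : 0 < a) : 0 < ∫ x : ℝ, x ^ k * exp (-a * x ^ p) := by
  rw [integral_pos_iff_support_of_nonneg (fun x => mul_nonneg (hk.pow_nonneg x) (exp_pos _).le)
    (integrable_pow_mul_exp_neg_mul_pow hk hp hp0 ha)]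
  refine lt_of_lt_of_le (by simp) (measure_mono (s := Ioi 0) fun x (hx : 0 < x) => ?_)
  simp [Function.mem_support, hx.ne', (exp_pos _).ne']

lemma integral_pow_mul_exp_neg_mul_mul_pow (k : ℕ) (hp0 : p ≠ 0) (a : ℝ) {s : ℝ} (hs : 0 < s) :
    ∫ x : ℝ, x ^ k * exp (-(a * s) * x ^ p)
      = s ^ (-(1 + k : ℝ) / p) * ∫ x : ℝ, x ^ k * exp (-a * x ^ p) := by
  set r : ℝ := s ^ (p⁻¹ : ℝ)
  have hr : 0 < r := rpow_pos_of_pos hs _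
  have hrp : r ^ p = s := by
    rw [← rpow_natCast, ← rpow_mul hs.le, inv_mul_cancel₀ (by exact_mod_cast hp0), rpow_one]
  have hscale : ∀ x : ℝ, x ^ k * exp (-(a * s) * x ^ p)
      = (r ^ k)⁻¹ * ((r * x) ^ k * exp (-a * (r * x) ^ p)) := fun x => by
    rw [mul_pow r x p, hrp, mul_pow]
    field_simp
  simp_rw [hscale]
  rw [integral_const_mul, Measure.integral_comp_mul_left (fun y => y ^ k * exp (-a * y ^ p)),
    abs_of_pos (inv_pos.2 hr), smul_eq_mul, ← mul_assoc, ← mul_inv, ← pow_succ, ← rpow_natCast,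
    ← rpow_mul hs.le, ← rpow_neg hs.le]
  congr 2
  push_cast
  ring

end PowMulExpNegMulPow

lemma exp_neg_mul_le_exp_mul_exp_neg_mul_one_add {a b y t : ℝ} (ha : 0 ≤ a) (hy : y ≤ 1)
    (ht : 0 ≤ t) (hb : a * y ≤ b) : exp (-b * t) ≤ exp a * exp (-(a * (1 + t)) * y) := by
  rw [← exp_add, exp_le_exp]
  nlinarith [mul_nonneg ha (sub_nonneg.2 hy)]

lemma pow_mul_exp_mul_norm_sq_le {E : Type*} [SeminormedAddCommGroup E] {k : ℕ} (hk : Even k)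
    {c t φ ξ M : ℝ} {u : E} (hc : 0 ≤ c) (ht : 0 ≤ t) (hξ : |ξ| ≤ 1) (hφ : 1 / 5 * ξ ^ 6 ≤ φ)
    (hu : ‖u‖ ≤ M) :
    ξ ^ k * exp (-c * φ * t) * ‖u‖ ^ 2
      ≤ exp (c / 5) * M ^ 2 * (ξ ^ k * exp (-(c / 5 * (1 + t)) * ξ ^ 6)) := by
  have hξ6 : ξ ^ 6 ≤ 1 :=
    (le_abs_self _).trans (by rw [abs_pow]; exact pow_le_one₀ (abs_nonneg ξ) hξ)
  have hexp : exp (-c * φ * t) ≤ exp (c / 5) * exp (-(c / 5 * (1 + t)) * ξ ^ 6) := by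
    rw [neg_mul c φ]
    exact exp_neg_mul_le_exp_mul_exp_neg_mul_one_add (a := c / 5) (by positivity) hξ6 ht
      (by nlinarith [mul_le_mul_of_nonneg_left hφ hc])
  calc ξ ^ k * exp (-c * φ * t) * ‖u‖ ^ 2
      ≤ ξ ^ k * (exp (c / 5) * exp (-(c / 5 * (1 + t)) * ξ ^ 6)) * M ^ 2 := by
        gcongr
        exacts [mul_nonneg (hk.pow_nonneg ξ) (by positivity), hk.pow_nonneg ξ]
    _ = _ := by ring

theorem stmt_10 (c : ℝ) (hc : 0 < c) (j : ℕ) :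
    ∃ C > 0, ∀ (n : ℕ) (f : ℝ → ℝ) (U₀hat : ℝ → EuclideanSpace ℂ (Fin n)) (M : ℝ),
      (∀ ξ : ℝ, |ξ| ≤ 1 → f ξ ≥ (1 / 5) * ξ ^ 6) →
      (∀ ξ : ℝ, ‖U₀hat ξ‖ ≤ M) →
      ∀ t : ℝ, 0 ≤ t →
        ∫ ξ in Set.Icc (-1 : ℝ) 1,
            ξ ^ (2 * j) * Real.exp (-c * f ξ * t) * ‖U₀hat ξ‖ ^ 2
          ≤ C * (1 + t) ^ (-(1 + 2 * (j : ℝ)) / 6) * M ^ 2 := by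
  have hk : Even (2 * j) := even_two_mul j
  have hp : Even 6 := by decide
  refine ⟨exp (c / 5) * ∫ x : ℝ, x ^ (2 * j) * exp (-(c / 5) * x ^ 6),
    mul_pos (exp_pos _) (integral_pow_mul_exp_neg_mul_pow_pos hk hp (by norm_num) (by positivity)),
    fun n f U₀hat M hf hM t ht => ?_⟩
  have hint := integrable_pow_mul_exp_neg_mul_pow hk hp (by norm_num)
    (by positivity : 0 < c / 5 * (1 + t))
  calc ∫ ξ in Icc (-1 : ℝ) 1, ξ ^ (2 * j) * exp (-c * f ξ * t) * ‖U₀hat ξ‖ ^ 2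
      ≤ ∫ ξ in Icc (-1 : ℝ) 1,
          exp (c / 5) * M ^ 2 * (ξ ^ (2 * j) * exp (-(c / 5 * (1 + t)) * ξ ^ 6)) :=
        integral_mono_of_nonneg (.of_forall fun ξ =>
            mul_nonneg (mul_nonneg (hk.pow_nonneg ξ) (exp_pos _).le) (sq_nonneg _))
          (hint.const_mul _).integrableOn
          (ae_restrict_of_forall_mem measurableSet_Icc fun ξ hξ =>
            pow_mul_exp_mul_norm_sq_le hk hc.le ht (abs_le.2 hξ) (hf ξ (abs_le.2 hξ)) (hM ξ))
    _ ≤ exp (c / 5) * M ^ 2 * ∫ ξ, ξ ^ (2 * j) * exp (-(c / 5 * (1 + t)) * ξ ^ 6) := by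
        rw [integral_const_mul]
        exact mul_le_mul_of_nonneg_left (setIntegral_le_integral hint
          (.of_forall fun ξ => mul_nonneg (hk.pow_nonneg ξ) (exp_pos _).le)) (by positivity)
    _ = _ := by
        rw [integral_pow_mul_exp_neg_mul_mul_pow _ (by norm_num) _ (by positivity)]
        push_cast
        ring
end

section
/- Let c > 0, j, ℓ ∈ ℕ, and let Û₀ : ℝ → ℂⁿ be measurable with ∫_ℝ |ξ|^{2(j+ℓ)}|Û₀(ξ)|² dξ < ∞. If f(ξ) ≥ (1/5)ξ^{−2} for |ξ| > 1, then ∫_{|ξ|>1} |ξ|^{2j} e^{−c f(ξ) t} |Û₀(ξ)|² dξ ≤ C (1+t)^{−ℓ} ∫_ℝ |ξ|^{2(j+ℓ)} |Û₀(ξ)|² dξ for all t ≥ 0, where C depends only on c and ℓ. -/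
/-! For `|ξ| > 1` the hypothesis on `f` gives `e^{-c f(ξ) t} ≤ e^{-a u}` with `a = c/5` and
`u = t/ξ²`. Since `1 + t ≤ ξ² (1 + u)`, the factor `(1 + t)^ℓ` is paid for by `ξ^{2ℓ}` (the `ℓ`
extra derivatives) together with `(1 + u)^ℓ e^{-a u}`, which is bounded because the exponential
beats every polynomial: `(a(1 + u))^ℓ / ℓ! ≤ e^{a(1 + u)}`. Integrating the pointwise bound
gives the estimate. -/

open MeasureTheory Real

open scoped Nat

lemma one_add_pow_le_mul_exp {a : ℝ} (ha : 0 < a) (ℓ : ℕ) {u : ℝ} (hu : 0 ≤ u) :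
    (1 + u) ^ ℓ ≤ ℓ ! * exp a / a ^ ℓ * exp (a * u) := by
  have h := pow_div_factorial_le_exp _ (by positivity : 0 ≤ a * (1 + u)) ℓ
  rw [mul_pow, mul_one_add, exp_add, div_le_iff₀ (by positivity)] at h
  rw [div_mul_eq_mul_div, le_div_iff₀ (by positivity)]
  linarith

lemma exp_neg_div_mul_one_add_pow_le {a : ℝ} (ha : 0 < a) (ℓ : ℕ) {t x : ℝ} (ht : 0 ≤ t)
    (hx : 1 ≤ x) :
    exp (-(a * t / x)) * (1 + t) ^ ℓ ≤ ℓ ! * exp a / a ^ ℓ * x ^ ℓ := by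
  have hx₀ : 0 < x := one_pos.trans_le hx
  have hu : 0 ≤ t / x := div_nonneg ht hx₀.le
  have h_one_add : 1 + t ≤ x * (1 + t / x) := by
    rw [mul_one_add, mul_div_cancel₀ t hx₀.ne']
    linarith
  calc exp (-(a * t / x)) * (1 + t) ^ ℓ
      ≤ exp (-(a * (t / x))) * (x ^ ℓ * (1 + t / x) ^ ℓ) := by
        rw [← mul_pow, mul_div_assoc]
        gcongr
    _ ≤ exp (-(a * (t / x))) * (x ^ ℓ * (ℓ ! * exp a / a ^ ℓ * exp (a * (t / x)))) := by
        gcongr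
        exact one_add_pow_le_mul_exp ha ℓ hu
    _ = ℓ ! * exp a / a ^ ℓ * x ^ ℓ := by
        rw [exp_neg]
        field_simp

lemma exp_neg_mul_le_of_one_lt_abs {c : ℝ} (hc : 0 < c) (ℓ : ℕ) {ξ t y : ℝ} (hξ : 1 < |ξ|)
    (hy : 1 / 5 * ξ ^ (-2 : ℤ) ≤ y) (ht : 0 ≤ t) :
    exp (-c * y * t) ≤ ℓ ! * exp (c / 5) / (c / 5) ^ ℓ * (1 + t) ^ (-(ℓ : ℝ)) * |ξ| ^ (2 * ℓ) := by
  have hξ₂ : 1 ≤ ξ ^ 2 := by nlinarith [sq_abs ξ, abs_nonneg ξ]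
  rw [zpow_neg, zpow_two, ← sq] at hy
  have h_exp : exp (-c * y * t) ≤ exp (-(c / 5 * t / ξ ^ 2)) := by
    rw [exp_le_exp, show c / 5 * t / ξ ^ 2 = c * (1 / 5 * (ξ ^ 2)⁻¹) * t by ring]
    have := mul_le_mul_of_nonneg_right (mul_le_mul_of_nonneg_left hy hc.le) ht
    linarith
  have h_bound := exp_neg_div_mul_one_add_pow_le (by positivity : 0 < c / 5) ℓ ht hξ₂
  rw [rpow_neg (by linarith), rpow_natCast, pow_mul, sq_abs, mul_right_comm (_ / _ : ℝ),
    ← div_eq_mul_inv, le_div_iff₀ (by positivity)]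
  calc exp (-c * y * t) * (1 + t) ^ ℓ ≤ exp (-(c / 5 * t / ξ ^ 2)) * (1 + t) ^ ℓ := by gcongr
    _ ≤ _ := h_bound

theorem stmt_11 (c : ℝ) (hc : 0 < c) (ℓ : ℕ) :
    ∃ C > 0, ∀ (n : ℕ) (j : ℕ) (f : ℝ → ℝ) (U₀hat : ℝ → EuclideanSpace ℂ (Fin n)),
      (∀ ξ : ℝ, 1 < |ξ| → f ξ ≥ (1 / 5) * ξ ^ (-2 : ℤ)) →
      Integrable (fun ξ : ℝ => |ξ| ^ (2 * (j + ℓ)) * ‖U₀hat ξ‖ ^ 2) →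
      ∀ t : ℝ, 0 ≤ t →
        ∫ ξ in {ξ : ℝ | 1 < |ξ|},
            |ξ| ^ (2 * j) * Real.exp (-c * f ξ * t) * ‖U₀hat ξ‖ ^ 2
          ≤ C * (1 + t) ^ (-(ℓ : ℝ)) *
              ∫ ξ : ℝ, |ξ| ^ (2 * (j + ℓ)) * ‖U₀hat ξ‖ ^ 2 := by
  refine ⟨ℓ ! * exp (c / 5) / (c / 5) ^ ℓ, by positivity, ?_⟩
  intro n j f U₀hat hf hInt t ht
  set C := ℓ ! * exp (c / 5) / (c / 5) ^ ℓ
  have hS : MeasurableSet {ξ : ℝ | 1 < |ξ|} := measurableSet_lt measurable_const measurable_abs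
  rw [← integral_const_mul]
  -- `f` is not assumed measurable; `integral_mono_of_nonneg` needs integrability only of the bound.
  refine (integral_mono_of_nonneg (ae_of_all _ fun ξ => by positivity)
    (hInt.const_mul _).restrict (ae_restrict_of_forall_mem hS fun ξ hξ => ?_)).trans
    (setIntegral_le_integral (hInt.const_mul _) (ae_of_all _ fun ξ => by positivity))
  have h_exp := exp_neg_mul_le_of_one_lt_abs hc ℓ hξ (hf ξ hξ) ht
  calc |ξ| ^ (2 * j) * exp (-c * f ξ * t) * ‖U₀hat ξ‖ ^ 2
      ≤ |ξ| ^ (2 * j) * (C * (1 + t) ^ (-(ℓ : ℝ)) * |ξ| ^ (2 * ℓ)) * ‖U₀hat ξ‖ ^ 2 := by gcongr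
    _ = C * (1 + t) ^ (-(ℓ : ℝ)) * (|ξ| ^ (2 * (j + ℓ)) * ‖U₀hat ξ‖ ^ 2) := by ring
end
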